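/- arXiv:2306.01518 — 3 statements merged into one kernel-verified Lean document; each statement's English description precedes it below -/
import Mathlib

section
/- Let G be a topological group and 𝓑 a Hecke category with G-support. Let φ : B → B′ be a morphism and let L₁, …, L_m be pairwise disjoint subsets of G. If φ₁, …, φ_m and φ′₁, …, φ′_m are two families of morphisms B → B′ with supp(φ_i) ⊆ L_i and supp(φ′_i) ⊆ L_i for all i, and φ₁ + ⋯ + φ_m = φ = φ′₁ + ⋯ + φ′_m, then φ_i = φ′_i for every i. In particular the collection of morphisms appearing in the Morphism Additivity axiom is unique. -/
open CategoryTheory Pointwise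

universe u

/-- A category with `G`-support: a preadditive category together with a compact support
in `G` for every morphism, satisfying the axioms of Bartels–Lück. -/
structure GSupport (G : Type u) [Group G] [TopologicalSpace G]
    (C : Type u) [Category.{u} C] [Preadditive C] where
  supp : ∀ {X Y : C}, (X ⟶ Y) → Set G
  isCompact_supp : ∀ {X Y : C} (f : X ⟶ Y), IsCompact (supp f)
  supp_eq_empty_iff : ∀ {X Y : C} (f : X ⟶ Y), supp f = ∅ ↔ f = 0
  supp_comp : ∀ {X Y Z : C} (f : X ⟶ Y) (g : Y ⟶ Z), supp (f ≫ g) ⊆ supp g * supp f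
  supp_add : ∀ {X Y : C} (f f' : X ⟶ Y), supp (f + f') ⊆ supp f ∪ supp f'
  supp_neg_id : ∀ X : C, supp (-(𝟙 X)) = supp (𝟙 X)

/-- `L` is a subgroup of finite index in the subgroup (given as a subset) `K` of `G`. -/
def IsFinIndexSubgroupOf {G : Type u} [Group G] (L K : Set G) : Prop :=
  L ⊆ K ∧ (1 : G) ∈ L ∧ (∀ a ∈ L, ∀ b ∈ L, a * b ∈ L) ∧ (∀ a ∈ L, a⁻¹ ∈ L) ∧
    {T : Set G | ∃ g ∈ K, T = ({g} : Set G) * L}.Finite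

/-- A Hecke category with `G`-support: a category with `G`-support satisfying in addition
the axioms (Subgroups), (Translation), (Morphism Additivity) and (Support cofinality),
the latter two with chosen data. -/
structure HeckeGSupport (G : Type u) [Group G] [TopologicalSpace G]
    (C : Type u) [Category.{u} C] [Preadditive C] extends GSupport G C where
  one_mem_objSupp : ∀ X : C, (1 : G) ∈ supp (𝟙 X)
  mul_mem_objSupp : ∀ (X : C), ∀ a ∈ supp (𝟙 X), ∀ b ∈ supp (𝟙 X), a * b ∈ supp (𝟙 X)
  inv_mem_objSupp : ∀ (X : C), ∀ a ∈ supp (𝟙 X), a⁻¹ ∈ supp (𝟙 X)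
  supp_bimul : ∀ {X Y : C} (f : X ⟶ Y), supp f = supp (𝟙 Y) * supp f * supp (𝟙 X)
  finite_left_cosets : ∀ {X Y : C} (f : X ⟶ Y),
    {T : Set G | ∃ g ∈ supp f, T = supp (𝟙 Y) * ({g} : Set G)}.Finite
  finite_right_cosets : ∀ {X Y : C} (f : X ⟶ Y),
    {T : Set G | ∃ g ∈ supp f, T = ({g} : Set G) * supp (𝟙 X)}.Finite
  translation : ∀ (X : C) (g : G), ∃ (Y : C) (ψ : X ≅ Y),
    supp (𝟙 Y) = ({g} : Set G) * supp (𝟙 X) * ({g⁻¹} : Set G) ∧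
    supp ψ.hom = ({g} : Set G) * supp (𝟙 X) ∧
    supp ψ.inv ⊆ ({g⁻¹} : Set G) * supp (𝟙 Y)
  morphism_additivity : ∀ {X Y : C} (f : X ⟶ Y) (m : ℕ) (L : Fin m → Set G),
    (∀ i, IsClosed (L i)) →
    (∀ i j, i ≠ j → Disjoint (L i) (L j)) →
    supp f = ⋃ i, L i →
    (∀ i, supp (𝟙 Y) * L i * supp (𝟙 X) = L i) →
    ∃ φ : Fin m → (X ⟶ Y), f = ∑ i, φ i ∧ ∀ i, supp (φ i) = L i
  res : C → Set G → C
  resI : ∀ (X : C) (L : Set G), X ⟶ res X L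
  resR : ∀ (X : C) (L : Set G), res X L ⟶ X
  objSupp_res : ∀ (X : C) (L : Set G), IsFinIndexSubgroupOf L (supp (𝟙 X)) →
    supp (𝟙 (res X L)) = L
  supp_resI : ∀ (X : C) (L : Set G), IsFinIndexSubgroupOf L (supp (𝟙 X)) →
    supp (resI X L) = supp (𝟙 X)
  supp_resR : ∀ (X : C) (L : Set G), IsFinIndexSubgroupOf L (supp (𝟙 X)) →
    supp (resR X L) = supp (𝟙 X)
  resI_resR : ∀ (X : C) (L : Set G), IsFinIndexSubgroupOf L (supp (𝟙 X)) →
    resI X L ≫ resR X L = 𝟙 X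
  res_res : ∀ (X : C) (L L' : Set G), IsFinIndexSubgroupOf L (supp (𝟙 X)) →
    IsFinIndexSubgroupOf L' (supp (𝟙 X)) → L' ⊆ L → res (res X L) L' = res X L'
  resI_res : ∀ (X : C) (L L' : Set G) (h : IsFinIndexSubgroupOf L (supp (𝟙 X)))
    (h' : IsFinIndexSubgroupOf L' (supp (𝟙 X))) (hLL : L' ⊆ L),
    resI X L ≫ resI (res X L) L' ≫ eqToHom (res_res X L L' h h' hLL) = resI X L'
  resR_res : ∀ (X : C) (L L' : Set G) (h : IsFinIndexSubgroupOf L (supp (𝟙 X)))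
    (h' : IsFinIndexSubgroupOf L' (supp (𝟙 X))) (hLL : L' ⊆ L),
    eqToHom (res_res X L L' h h' hLL).symm ≫ resR (res X L) L' ≫ resR X L = resR X L'
  res_self : ∀ X : C, res X (supp (𝟙 X)) = X
  resI_self : ∀ X : C, resI X (supp (𝟙 X)) = eqToHom (res_self X).symm
  resR_self : ∀ X : C, resR X (supp (𝟙 X)) = eqToHom (res_self X)


section Aux

variable {G : Type u} [Group G] [TopologicalSpace G]
  {C : Type u} [Category.{u} C] [Preadditive C] (𝓑 : HeckeGSupport G C)

lemma heckeGSupport_supp_neg {X Y : C} (f : X ⟶ Y) : 𝓑.supp (-f) ⊆ 𝓑.supp f := by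
  have h1 : (-f) = f ≫ (-(𝟙 Y)) := by simp
  have h2 : 𝓑.supp (-f) ⊆ 𝓑.supp (-(𝟙 Y)) * 𝓑.supp f := by
    rw [h1]; exact 𝓑.supp_comp f (-(𝟙 Y))
  rw [𝓑.supp_neg_id] at h2
  refine h2.trans ?_
  intro x hx
  obtain ⟨k, hk, g, hg, rfl⟩ := hx
  have hbg := 𝓑.supp_bimul f
  rw [hbg] at hg
  obtain ⟨kg, hkg, j, hj, rfl⟩ := hg
  obtain ⟨k', hk', s, hs, rfl⟩ := hkg
  rw [hbg]
  exact ⟨(k * k') * s, ⟨k * k', 𝓑.mul_mem_objSupp Y k hk k' hk', s, hs, rfl⟩, j, hj,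
    by group⟩

lemma heckeGSupport_supp_sum {X Y : C} {ι : Type*} (s : Finset ι) (f : ι → (X ⟶ Y)) :
    𝓑.supp (∑ i ∈ s, f i) ⊆ ⋃ i ∈ s, 𝓑.supp (f i) := by
  classical
  induction s using Finset.induction with
  | empty =>
      simp only [Finset.sum_empty]
      rw [(𝓑.supp_eq_empty_iff (0 : X ⟶ Y)).2 rfl]
      simp
  | insert a t hnot ih =>
      rw [Finset.sum_insert hnot]
      refine (𝓑.supp_add _ _).trans ?_
      intro x hx
      rcases hx with hx | hx
      · exact Set.mem_biUnion (Finset.mem_insert_self a t) hx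
      · obtain ⟨i, hi, hxi⟩ := Set.mem_iUnion₂.1 (ih hx)
        exact Set.mem_biUnion (Finset.mem_insert_of_mem hi) hxi

end Aux

/-- Uniqueness of the decomposition in the Morphism Additivity axiom:
if `L₁, …, L_m` are pairwise disjoint subsets of `G` and two families of morphisms
`φᵢ, φ'ᵢ : B ⟶ B'` with `supp φᵢ ⊆ Lᵢ` and `supp φ'ᵢ ⊆ Lᵢ` both sum to `φ`, then they
agree. In particular the collection of morphisms appearing in the Morphism Additivity
axiom is unique. -/
theorem heckeGSupport_unique_decomposition
    {G : Type u} [Group G] [TopologicalSpace G] [IsTopologicalGroup G]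
    {C : Type u} [Category.{u} C] [Preadditive C]
    (𝓑 : HeckeGSupport G C) {B B' : C} (φ : B ⟶ B') (m : ℕ) (L : Fin m → Set G)
    (hdisj : ∀ i j, i ≠ j → Disjoint (L i) (L j))
    (φ₁ φ₂ : Fin m → (B ⟶ B'))
    (hsupp₁ : ∀ i, 𝓑.supp (φ₁ i) ⊆ L i) (hsupp₂ : ∀ i, 𝓑.supp (φ₂ i) ⊆ L i)
    (hsum₁ : ∑ i, φ₁ i = φ) (hsum₂ : ∑ i, φ₂ i = φ) :
    ∀ i, φ₁ i = φ₂ i := by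
  classical
  set ψ : Fin m → (B ⟶ B') := fun i => φ₁ i - φ₂ i with hψ
  have hψsupp : ∀ i, 𝓑.supp (ψ i) ⊆ L i := by
    intro i
    have : ψ i = φ₁ i + (-(φ₂ i)) := by simp [hψ, sub_eq_add_neg]
    rw [this]
    refine (𝓑.supp_add _ _).trans ?_
    exact Set.union_subset (hsupp₁ i) ((heckeGSupport_supp_neg 𝓑 _).trans (hsupp₂ i))
  have hsum0 : ∑ i, ψ i = 0 := by
    simp [hψ, Finset.sum_sub_distrib, hsum₁, hsum₂]
  intro j
  have hj : ψ j = -(∑ i ∈ Finset.univ.erase j, ψ i) := by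
    have h := Finset.sum_erase_add Finset.univ ψ (Finset.mem_univ j)
    rw [hsum0] at h
    exact eq_neg_of_add_eq_zero_right h
  have h1 : 𝓑.supp (ψ j) ⊆ ⋃ i ∈ Finset.univ.erase j, L i := by
    rw [hj]
    refine (heckeGSupport_supp_neg 𝓑 _).trans ?_
    refine (heckeGSupport_supp_sum 𝓑 _ _).trans ?_
    exact Set.iUnion₂_mono fun i _ => hψsupp i
  have hempty : 𝓑.supp (ψ j) = ∅ := by
    rw [Set.eq_empty_iff_forall_notMem]
    intro x hx
    obtain ⟨i, hi, hxi⟩ := Set.mem_iUnion₂.1 (h1 hx)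
    have hne : i ≠ j := Finset.ne_of_mem_erase hi
    exact (hdisj j i (Ne.symm hne)).le_bot ⟨hψsupp j hx, hxi⟩
  have := (𝓑.supp_eq_empty_iff (ψ j)).1 hempty
  exact sub_eq_zero.1 this
end

section
/- Let G be a group, N ⊴ G a normal subgroup, R an associative unital ring, ρ : G → Aut(R) a group homomorphism, and ω : N → Z(R)ˣ a homomorphism into the central units of R with ω(gng⁻¹) = ω(n), ρ(g)(ω(n)) = ω(n) and ρ(n) = id_R for all n ∈ N, g ∈ G. Let K ≤ G be a subgroup with ρ(k) = id_R for all k ∈ K and ω(n) = 1 for all n ∈ N ∩ K. Let s, s′ : G → R be ω-equivariant functions for which K is admissible, and assume that only finitely many left cosets of NK contain an element t with s′(t⁻¹) ≠ 0. Then for every g ∈ G the function t ↦ s(gt) · ρ(gt)(s′(t⁻¹)) is constant on every left coset tNK, and for any two transversals T and T′ of G/NK the finitely supported sums agree: Σ_{t ∈ T} s(gt) · ρ(gt)(s′(t⁻¹)) = Σ_{t′ ∈ T′} s(gt′) · ρ(gt′)(s′(t′⁻¹)). -/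
/-! ### The Hecke algebra product: well-definedness of the transversal sums -/

variable {G : Type*} [Group G] {R : Type*} [Ring R]

/-- The subset `NK = {nk : n ∈ N, k ∈ K}` of `G`. -/
def NKSet (N K : Subgroup G) : Set G :=
  {x : G | ∃ n ∈ N, ∃ k ∈ K, x = n * k}

/-- `T` is a transversal for the projection `G → G/NK`: every `g ∈ G` lies in `tNK` for
exactly one `t ∈ T`. -/
def IsTransversal (N K : Subgroup G) (T : Set G) : Prop :=
  ∀ g : G, ∃! t : G, t ∈ T ∧ t⁻¹ * g ∈ NKSet N K

/-- The function `s : G → R` is `ω`-equivariant: `s(ng) = ω(n)·s(g)` and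
`s(gn) = s(g)·ω(n)`. -/
def OmegaEquivariant (N : Subgroup G) (ω : N →* Rˣ) (s : G → R) : Prop :=
  ∀ (n : N) (g : G), s (n * g) = (ω n : R) * s g ∧ s (g * n) = s g * (ω n : R)

/-- The subgroup `K` is admissible for `s`: `s(kg) = s(g) = s(gk)` for all `k ∈ K`. -/
def Admissible (K : Subgroup G) (s : G → R) : Prop :=
  ∀ (k : K) (g : G), s (k * g) = s g ∧ s (g * k) = s g

/-- The integrand `t ↦ s(gt) · ρ(gt)(s'(t⁻¹))` of the Hecke algebra product. -/
def heckeTerm (ρ : G →* RingAut R) (s s' : G → R) (g t : G) : R :=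
  s (g * t) * (ρ (g * t)) (s' t⁻¹)

/-- **Statement 14**: under the standing assumptions on `ρ` and `ω` and for
`ω`-equivariant functions `s, s'` for which `K` is admissible and such that only
finitely many left cosets of `NK` contain an element `t` with `s'(t⁻¹) ≠ 0`, the
function `t ↦ s(gt) · ρ(gt)(s'(t⁻¹))` is constant on every left coset `tNK`, and the
finitely supported sums over any two transversals of `G/NK` agree. -/
theorem heckeProduct_welldefined
    {G : Type*} [Group G] {R : Type*} [Ring R]
    (N : Subgroup G) (hN : N.Normal) (ρ : G →* RingAut R) (ω : N →* Rˣ)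
    (hωcentral : ∀ (n : N) (r : R), (ω n : R) * r = r * (ω n : R))
    (hωconj : ∀ (g : G) (n : N), ω ⟨g * n * g⁻¹, hN.conj_mem n.1 n.2 g⟩ = ω n)
    (hρω : ∀ (g : G) (n : N), ρ g (ω n : R) = (ω n : R))
    (hρN : ∀ n : N, ρ (n : G) = RingEquiv.refl R)
    (K : Subgroup G)
    (hρK : ∀ k : K, ρ (k : G) = RingEquiv.refl R)
    (hωK : ∀ n : N, (n : G) ∈ K → ω n = 1)
    (s s' : G → R)
    (hs : OmegaEquivariant N ω s) (hs' : OmegaEquivariant N ω s')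
    (hKs : Admissible K s) (hKs' : Admissible K s')
    (hfin : {Y : Set G | ∃ t : G, s' t⁻¹ ≠ 0 ∧
      Y = {x : G | t⁻¹ * x ∈ NKSet N K}}.Finite) :
    (∀ (g t t' : G), t⁻¹ * t' ∈ NKSet N K →
      heckeTerm ρ s s' g t = heckeTerm ρ s s' g t') ∧
    (∀ (T T' : Set G), IsTransversal N K T → IsTransversal N K T' → ∀ g : G,
      ∑ᶠ t ∈ T, heckeTerm ρ s s' g t = ∑ᶠ t ∈ T', heckeTerm ρ s s' g t) := by
  classical
  haveI := hN
  -- NKSet is the subgroup N ⊔ K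
  have hNK : NKSet N K = ((N ⊔ K : Subgroup G) : Set G) := by
    rw [Subgroup.normal_mul]
    ext x
    constructor
    · rintro ⟨n, hn, k, hk, rfl⟩
      exact Set.mul_mem_mul hn hk
    · rintro ⟨n, hn, k, hk, rfl⟩
      exact ⟨n, hn, k, hk, rfl⟩
  -- Part 1: constancy on cosets
  have part1 : ∀ (g t t' : G), t⁻¹ * t' ∈ NKSet N K →
      heckeTerm ρ s s' g t = heckeTerm ρ s s' g t' := by
    intro g t t' h
    obtain ⟨n, hn, k, hk, hnk⟩ := h
    have ht' : t' = t * n * k := by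
      have : t * (t⁻¹ * t') = t * (n * k) := by rw [hnk]
      simpa [mul_assoc] using this
    subst ht'
    set m : N := ⟨n, hn⟩
    set κ : K := ⟨k, hk⟩
    have h1 : s (g * (t * n * k)) = s (g * t) * (ω m : R) := by
      have e1 : g * (t * n * k) = (g * t * (m : G)) * (κ : G) := by
        simp [m, κ, mul_assoc]
      rw [e1, (hKs κ _).2, (hs m (g * t)).2]
    have h2 : s' (t * n * k)⁻¹ = ((ω m)⁻¹ : Rˣ) * s' t⁻¹ := by
      have e2 : (t * n * k)⁻¹ = (κ⁻¹ : K) * ((m⁻¹ : N) * t⁻¹) := by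
        simp [m, κ, mul_assoc]
      rw [e2, (hKs' κ⁻¹ _).1, (hs' m⁻¹ t⁻¹).1, map_inv]
    have h3 : ρ (g * (t * n * k)) = ρ (g * t) := by
      have e3 : g * (t * n * k) = (g * t) * (m : G) * (κ : G) := by
        simp [m, κ, mul_assoc]
      rw [e3, map_mul, map_mul, hρN m, hρK κ]
      ext r; rfl
    show heckeTerm ρ s s' g t = heckeTerm ρ s s' g (t * n * k)
    rw [heckeTerm, heckeTerm, h1, h2, h3, RingEquiv.map_mul]
    have h4 : (ρ (g * t)) (((ω m)⁻¹ : Rˣ) : R) = (((ω m)⁻¹ : Rˣ) : R) := by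
      have := hρω (g * t) m⁻¹
      rwa [map_inv] at this
    rw [h4, mul_assoc, ← mul_assoc ((ω m : R)), Units.mul_inv, one_mul]
  refine ⟨part1, ?_⟩
  intro T T' hT hT' g
  -- the matching map: send t ∈ T to the unique element of T' in the same coset
  have key : ∀ t : G, ∃! u : G, u ∈ T' ∧ u⁻¹ * t ∈ NKSet N K := fun t => hT' t
  set e : G → G := fun t => (key t).choose with he
  have heP : ∀ t : G, e t ∈ T' ∧ (e t)⁻¹ * t ∈ NKSet N K := fun t => (key t).choose_spec.1
  have heU : ∀ t u : G, u ∈ T' → u⁻¹ * t ∈ NKSet N K → u = e t :=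
    fun t u h1 h2 => (key t).choose_spec.2 u ⟨h1, h2⟩
  have hbij : Set.BijOn e T T' := by
    refine ⟨fun t _ => (heP t).1, ?_, ?_⟩
    · intro t1 h1 t2 h2 hee
      have m1 : (e t1)⁻¹ * t1 ∈ NKSet N K := (heP t1).2
      have m2 : (e t1)⁻¹ * t2 ∈ NKSet N K := by rw [hee]; exact (heP t2).2
      have m3 : t1⁻¹ * t2 ∈ NKSet N K := by
        rw [hNK] at m1 m2 ⊢
        have := mul_mem (inv_mem m1) m2
        simpa [mul_assoc] using this
      obtain ⟨u, -, huniq⟩ := hT t2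
      have e1 := huniq t1 ⟨h1, m3⟩
      have e2 := huniq t2 ⟨h2, by rw [hNK]; simpa using one_mem (N ⊔ K)⟩
      rw [e1, e2]
    · intro u hu
      obtain ⟨t, ⟨ht, htm⟩, _⟩ := hT u
      refine ⟨t, ht, ?_⟩
      have : u⁻¹ * t ∈ NKSet N K := by
        rw [hNK] at htm ⊢
        simpa using inv_mem htm
      exact (heU t u hu this).symm
  refine finsum_mem_eq_of_bijOn e hbij ?_
  intro t _
  refine part1 g t (e t) ?_
  have := (heP t).2
  rw [hNK] at this ⊢
  simpa using inv_mem this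
end

section
/- Let G be a group, N ⊴ G a normal subgroup, R an associative unital ring, ρ : G → Aut(R) a group homomorphism, and ω : N → Z(R)ˣ a homomorphism into the central units of R with ω(gng⁻¹) = ω(n), ρ(g)(ω(n)) = ω(n) and ρ(n) = id_R for all n ∈ N, g ∈ G. Let K′ ≤ K ≤ G be subgroups with ρ(k) = id_R for all k ∈ K and ω(n) = 1 for all n ∈ N ∩ K, and assume the index m := [NK : NK′] is finite. Let s, s′ : G → R be ω-equivariant functions for which K is admissible (hence also K′), and assume that only finitely many left cosets of NK′ contain an element t with s′(t⁻¹) ≠ 0. Then for every g ∈ G, for any transversal T of G/NK and any transversal T′ of G/NK′: Σ_{t′ ∈ T′} s(gt′) · ρ(gt′)(s′(t′⁻¹)) = m · Σ_{t ∈ T} s(gt) · ρ(gt)(s′(t⁻¹)). -/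
/-! ### The Hecke algebra product: well-definedness of the transversal sums -/

variable {G : Type*} [Group G] {R : Type*} [Ring R]

theorem NKSet_eq_coe (N H : Subgroup G) (hN : N.Normal) :
    NKSet N H = ((N ⊔ H : Subgroup G) : Set G) := by
  haveI := hN
  rw [Subgroup.normal_mul]
  ext x
  simp only [NKSet, Set.mem_setOf_eq, Set.mem_mul, SetLike.mem_coe, eq_comm]

theorem hecke_coset
    (N : Subgroup G) (hN : N.Normal) (ρ : G →* RingAut R) (ω : N →* Rˣ)
    (hωcentral : ∀ (n : N) (r : R), (ω n : R) * r = r * (ω n : R))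
    (hωconj : ∀ (g : G) (n : N), ω ⟨g * n * g⁻¹, hN.conj_mem n.1 n.2 g⟩ = ω n)
    (hρω : ∀ (g : G) (n : N), ρ g (ω n : R) = (ω n : R))
    (hρN : ∀ n : N, ρ (n : G) = RingEquiv.refl R)
    (H : Subgroup G)
    (hρH : ∀ k : H, ρ (k : G) = RingEquiv.refl R)
    (s s' : G → R)
    (hs : OmegaEquivariant N ω s) (hs' : OmegaEquivariant N ω s')
    (hHs : Admissible H s) (hHs' : Admissible H s')
    (g t x : G) (hx : t⁻¹ * x ∈ NKSet N H) :
    heckeTerm ρ s s' g x = heckeTerm ρ s s' g t ∧ (s' x⁻¹ = 0 ↔ s' t⁻¹ = 0) := by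
  obtain ⟨n, hn, k, hk, hxe⟩ := hx
  have hxeq : x = t * (n * k) := by rw [← hxe, mul_inv_cancel_left]
  set nn : N := ⟨n, hn⟩ with hnn
  set kk : H := ⟨k, hk⟩ with hkk
  set n' : N := ⟨(g * t) * nn * (g * t)⁻¹, hN.conj_mem nn.1 nn.2 (g * t)⟩ with hn'
  -- s (g * x) = ω n * s (g * t)
  have h1 : s (g * x) = (ω nn : R) * s (g * t) := by
    have e1 : g * x = ((n' : G) * (g * t)) * (kk : G) := by
      show g * x = ((g * t) * n * (g * t)⁻¹ * (g * t)) * k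
      rw [hxeq]; group
    rw [e1, (hHs kk _).2, (hs n' _).1, hωconj (g * t) nn]
  -- ρ (g * x) = ρ (g * t)
  have h2 : ρ (g * x) = ρ (g * t) := by
    have e2 : g * x = (g * t) * (nn : G) * (kk : G) := by
      show g * x = g * t * n * k
      rw [hxeq]; group
    rw [e2, map_mul, map_mul, hρN, hρH]
    show ρ (g * t) * 1 * 1 = ρ (g * t)
    rw [mul_one, mul_one]
  -- s' x⁻¹ = ω n⁻¹ * s' t⁻¹
  have h3 : s' x⁻¹ = ((ω nn)⁻¹ : Rˣ) * s' t⁻¹ := by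
    have e3 : x⁻¹ = ((kk⁻¹ : H) : G) * (((nn⁻¹ : N) : G) * t⁻¹) := by
      show x⁻¹ = k⁻¹ * (n⁻¹ * t⁻¹)
      rw [hxeq]; group
    rw [e3, (hHs' kk⁻¹ _).1, (hs' nn⁻¹ _).1, map_inv]
  constructor
  · show s (g * x) * (ρ (g * x)) (s' x⁻¹) = _
    rw [h1, h2, h3, map_mul]
    have h4 : (ρ (g * t)) ((ω nn)⁻¹ : Rˣ) = ((ω nn)⁻¹ : Rˣ) := by
      rw [← map_inv ω]; exact hρω (g * t) nn⁻¹
    rw [h4, hωcentral nn (s (g * t)), mul_assoc, ← mul_assoc ((ω nn : R)),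
      Units.mul_inv, one_mul]
    rfl
  · rw [h3]
    exact Units.mul_right_eq_zero _

/-- **Statement 15**: under the standing assumptions on `ρ` and `ω`, for nested
subgroups `K' ≤ K` with `ρ` trivial on `K` and `ω` trivial on `N ∩ K`, with finite index
`m = [NK : NK']`, and for `ω`-equivariant functions `s, s'` for which `K` is admissible
(hence also `K'`) and such that only finitely many left cosets of `NK'` contain an
element `t` with `s'(t⁻¹) ≠ 0`: for every `g ∈ G`, any transversal `T` of `G/NK` and any
transversal `T'` of `G/NK'`, one has
`Σ_{t' ∈ T'} s(gt')·ρ(gt')(s'(t'⁻¹)) = m · Σ_{t ∈ T} s(gt)·ρ(gt)(s'(t⁻¹))`. -/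
theorem heckeProduct_index_comparison
    {G : Type*} [Group G] {R : Type*} [Ring R]
    (N : Subgroup G) (hN : N.Normal) (ρ : G →* RingAut R) (ω : N →* Rˣ)
    (hωcentral : ∀ (n : N) (r : R), (ω n : R) * r = r * (ω n : R))
    (hωconj : ∀ (g : G) (n : N), ω ⟨g * n * g⁻¹, hN.conj_mem n.1 n.2 g⟩ = ω n)
    (hρω : ∀ (g : G) (n : N), ρ g (ω n : R) = (ω n : R))
    (hρN : ∀ n : N, ρ (n : G) = RingEquiv.refl R)
    (K' K : Subgroup G) (hK'K : K' ≤ K)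
    (hρK : ∀ k : K, ρ (k : G) = RingEquiv.refl R)
    (hωK : ∀ n : N, (n : G) ∈ K → ω n = 1)
    (m : ℕ) (T₀ : Finset G)
    (hT₀mem : ∀ x ∈ T₀, x ∈ NKSet N K)
    (hT₀cover : ∀ x ∈ NKSet N K, ∃! t : G, t ∈ T₀ ∧ t⁻¹ * x ∈ NKSet N K')
    (hT₀card : T₀.card = m)
    (s s' : G → R)
    (hs : OmegaEquivariant N ω s) (hs' : OmegaEquivariant N ω s')
    (hKs : Admissible K s) (hKs' : Admissible K s')
    (hfin : {Y : Set G | ∃ t : G, s' t⁻¹ ≠ 0 ∧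
      Y = {x : G | t⁻¹ * x ∈ NKSet N K'}}.Finite)
    (T T' : Set G) (hT : IsTransversal N K T) (hT' : IsTransversal N K' T')
    (g : G) :
    ∑ᶠ t' ∈ T', heckeTerm ρ s s' g t' = m • ∑ᶠ t ∈ T, heckeTerm ρ s s' g t := by
  classical
  set f : G → R := heckeTerm ρ s s' g with hf
  have hρK' : ∀ k : K', ρ (k : G) = RingEquiv.refl R := fun k => hρK ⟨k.1, hK'K k.2⟩
  have hK's : Admissible K' s := fun k x => hKs ⟨k.1, hK'K k.2⟩ x
  have hK's' : Admissible K' s' := fun k x => hKs' ⟨k.1, hK'K k.2⟩ x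
  have keyK : ∀ t x : G, t⁻¹ * x ∈ NKSet N K →
      f x = f t ∧ (s' x⁻¹ = 0 ↔ s' t⁻¹ = 0) := fun t x hx =>
    hecke_coset N hN ρ ω hωcentral hωconj hρω hρN K hρK s s' hs hs' hKs hKs' g t x hx
  have keyK' : ∀ t x : G, t⁻¹ * x ∈ NKSet N K' →
      f x = f t ∧ (s' x⁻¹ = 0 ↔ s' t⁻¹ = 0) := fun t x hx =>
    hecke_coset N hN ρ ω hωcentral hωconj hρω hρN K' hρK' s s' hs hs' hK's hK's' g t x hx
  have memK : ∀ x : G, x ∈ NKSet N K ↔ x ∈ (N ⊔ K : Subgroup G) := fun x => by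
    rw [NKSet_eq_coe N K hN]; rfl
  have memK' : ∀ x : G, x ∈ NKSet N K' ↔ x ∈ (N ⊔ K' : Subgroup G) := fun x => by
    rw [NKSet_eq_coe N K' hN]; rfl
  have hsup : (N ⊔ K' : Subgroup G) ≤ N ⊔ K := sup_le_sup_left hK'K N
  have oneMemK' : ∀ x : G, x⁻¹ * x ∈ NKSet N K' := fun x => by
    rw [memK']; simpa using one_mem (N ⊔ K' : Subgroup G)
  have fzero : ∀ x : G, s' x⁻¹ = 0 → f x = 0 := fun x hx => by
    show s (g * x) * (ρ (g * x)) (s' x⁻¹) = 0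
    rw [hx, map_zero, mul_zero]
  set c : G → Set G := fun t => {x : G | t⁻¹ * x ∈ NKSet N K'} with hc
  have cmem : ∀ t₁ t₂ : G, c t₁ = c t₂ → t₂⁻¹ * t₁ ∈ NKSet N K' := fun t₁ t₂ h => by
    have h1 : t₁ ∈ c t₁ := oneMemK' t₁
    rw [h] at h1
    exact h1
  have hP' : {t' : G | t' ∈ T' ∧ s' t'⁻¹ ≠ 0}.Finite := by
    apply Set.Finite.of_finite_image (f := c) ?_ ?_
    · apply hfin.subset
      rintro Y ⟨t', ⟨ht'T, ht'ne⟩, rfl⟩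
      exact ⟨t', ht'ne, rfl⟩
    · intro t₁ h₁ t₂ h₂ h12
      exact (hT' t₁).unique ⟨h₁.1, oneMemK' t₁⟩ ⟨h₂.1, cmem t₁ t₂ h12⟩
  have hP : {t : G | t ∈ T ∧ s' t⁻¹ ≠ 0}.Finite := by
    apply Set.Finite.of_finite_image (f := c) ?_ ?_
    · apply hfin.subset
      rintro Y ⟨t, ⟨htT, htne⟩, rfl⟩
      exact ⟨t, htne, rfl⟩
    · intro t₁ h₁ t₂ h₂ h12
      refine (hT t₁).unique ⟨h₁.1, ?_⟩ ⟨h₂.1, ?_⟩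
      · rw [memK]; simpa using one_mem (N ⊔ K : Subgroup G)
      · rw [memK]; exact hsup ((memK' _).1 (cmem t₁ t₂ h12))
  have red' : ∑ᶠ t' ∈ T', f t' = ∑ t' ∈ hP'.toFinset, f t' := by
    apply finsum_mem_eq_sum_of_inter_support_eq
    ext x
    simp only [Set.mem_inter_iff, Function.mem_support, Finset.mem_coe,
      Set.Finite.mem_toFinset, Set.mem_setOf_eq]
    constructor
    · rintro ⟨hx1, hx2⟩
      exact ⟨⟨hx1, fun h0 => hx2 (fzero x h0)⟩, hx2⟩
    · rintro ⟨⟨hx1, _⟩, hx2⟩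
      exact ⟨hx1, hx2⟩
  have red : ∑ᶠ t ∈ T, f t = ∑ t ∈ hP.toFinset, f t := by
    apply finsum_mem_eq_sum_of_inter_support_eq
    ext x
    simp only [Set.mem_inter_iff, Function.mem_support, Finset.mem_coe,
      Set.Finite.mem_toFinset, Set.mem_setOf_eq]
    constructor
    · rintro ⟨hx1, hx2⟩
      exact ⟨⟨hx1, fun h0 => hx2 (fzero x h0)⟩, hx2⟩
    · rintro ⟨⟨hx1, _⟩, hx2⟩
      exact ⟨hx1, hx2⟩
  rw [red', red]
  set φ : G → G := fun x => (hT x).exists.choose with hφ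
  have φspec : ∀ x : G, φ x ∈ T ∧ (φ x)⁻¹ * x ∈ NKSet N K := fun x =>
    (hT x).exists.choose_spec
  have φu : ∀ x t : G, t ∈ T → t⁻¹ * x ∈ NKSet N K → φ x = t := fun x t h1 h2 =>
    (hT x).unique ⟨(φspec x).1, (φspec x).2⟩ ⟨h1, h2⟩
  set χ : G → G := fun x => (hT' x).exists.choose with hχ
  have χspec : ∀ x : G, χ x ∈ T' ∧ (χ x)⁻¹ * x ∈ NKSet N K' := fun x =>
    (hT' x).exists.choose_spec
  have χu : ∀ x u : G, u ∈ T' → u⁻¹ * x ∈ NKSet N K' → χ x = u := fun x u h1 h2 =>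
    (hT' x).unique ⟨(χspec x).1, (χspec x).2⟩ ⟨h1, h2⟩
  have hmaps : ∀ x ∈ hP'.toFinset, φ x ∈ hP.toFinset := by
    intro x hx
    rw [Set.Finite.mem_toFinset] at hx ⊢
    refine ⟨(φspec x).1, fun h0 => hx.2 ((keyK (φ x) x (φspec x).2).2.mpr h0)⟩
  rw [← Finset.sum_fiberwise_of_maps_to hmaps f, Finset.smul_sum]
  apply Finset.sum_congr rfl
  intro t ht
  rw [Set.Finite.mem_toFinset] at ht
  have fibmem : ∀ x ∈ hP'.toFinset.filter (fun x => φ x = t),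
      t⁻¹ * x ∈ NKSet N K := fun x hx =>
    (Finset.mem_filter.1 hx).2 ▸ (φspec x).2
  have fib_eq : ∀ x ∈ hP'.toFinset.filter (fun x => φ x = t), f x = f t :=
    fun x hx => (keyK t x (fibmem x hx)).1
  rw [Finset.sum_congr rfl fib_eq, Finset.sum_const]
  congr 1
  rw [← hT₀card]
  refine Finset.card_bij'
    (fun x hx => (hT₀cover (t⁻¹ * x) (fibmem x hx)).exists.choose)
    (fun b _ => χ (t * b)) ?_ ?_ ?_ ?_
  · intro x hx
    exact (hT₀cover (t⁻¹ * x) (fibmem x hx)).exists.choose_spec.1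
  · intro b hb
    have w := χspec (t * b)
    have h5 : t⁻¹ * χ (t * b) ∈ NKSet N K := by
      have e : t⁻¹ * χ (t * b) = b * ((χ (t * b))⁻¹ * (t * b))⁻¹ := by group
      rw [memK, e]
      exact mul_mem ((memK b).1 (hT₀mem b hb)) (inv_mem (hsup ((memK' _).1 w.2)))
    rw [Finset.mem_filter, Set.Finite.mem_toFinset]
    refine ⟨⟨w.1, fun h0 => ht.2 ((keyK t (χ (t * b)) h5).2.mp h0)⟩, φu _ t ht.1 h5⟩
  · intro x hx
    have spec := (hT₀cover (t⁻¹ * x) (fibmem x hx)).exists.choose_spec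
    set b := (hT₀cover (t⁻¹ * x) (fibmem x hx)).exists.choose with hb
    refine χu (t * b) x ?_ ?_
    · exact (hP'.mem_toFinset.1 (Finset.mem_filter.1 hx).1).1
    · have e : x⁻¹ * (t * b) = (b⁻¹ * (t⁻¹ * x))⁻¹ := by group
      rw [memK', e]
      exact inv_mem ((memK' _).1 spec.2)
  · intro b hb
    have w := χspec (t * b)
    have h6 : b⁻¹ * (t⁻¹ * χ (t * b)) ∈ NKSet N K' := by
      have e : b⁻¹ * (t⁻¹ * χ (t * b)) = ((χ (t * b))⁻¹ * (t * b))⁻¹ := by group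
      rw [memK', e]
      exact inv_mem ((memK' _).1 w.2)
    have h5 : t⁻¹ * χ (t * b) ∈ NKSet N K := by
      have e : t⁻¹ * χ (t * b) = b * ((χ (t * b))⁻¹ * (t * b))⁻¹ := by group
      rw [memK, e]
      exact mul_mem ((memK b).1 (hT₀mem b hb)) (inv_mem (hsup ((memK' _).1 w.2)))
    have spec := (hT₀cover (t⁻¹ * χ (t * b)) h5).exists.choose_spec
    exact (hT₀cover (t⁻¹ * χ (t * b)) h5).unique ⟨spec.1, spec.2⟩ ⟨hb, h6⟩
end
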